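/- Let a, b, c, d be real numbers with a < b < c < d, a, b, c, d all nonzero, and |a|, |b|, |c|, |d| pairwise distinct (so that a², b², c², d² are pairwise distinct). If real numbers X, Y, Z, T satisfy a^i X + b^i Y + c^i Z + d^i T = -1 for i = 1, 3, 5, 7, then X = -(1-b²)(1-c²)(1-d²)/(a(a²-b²)(a²-c²)(a²-d²)), Y = -(1-a²)(1-c²)(1-d²)/(b(b²-a²)(b²-c²)(b²-d²)), Z = -(1-a²)(1-b²)(1-d²)/(c(c²-a²)(c²-b²)(c²-d²)), and T = -(1-a²)(1-b²)(1-c²)/(d(d²-a²)(d²-b²)(d²-c²)). -/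
import Mathlib


theorem stmt (a b c d X Y Z T : ℝ)
    (hord : a < b ∧ b < c ∧ c < d)
    (ha : a ≠ 0) (hb : b ≠ 0) (hc : c ≠ 0) (hd : d ≠ 0)
    (habs : |a| ≠ |b| ∧ |a| ≠ |c| ∧ |a| ≠ |d| ∧ |b| ≠ |c| ∧ |b| ≠ |d| ∧ |c| ≠ |d|)
    (h1 : a*X + b*Y + c*Z + d*T = -1)
    (h3 : a^3*X + b^3*Y + c^3*Z + d^3*T = -1)
    (h5 : a^5*X + b^5*Y + c^5*Z + d^5*T = -1)
    (h7 : a^7*X + b^7*Y + c^7*Z + d^7*T = -1) :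
    X = -((1-b^2)*(1-c^2)*(1-d^2))/(a*(a^2-b^2)*(a^2-c^2)*(a^2-d^2)) ∧
    Y = -((1-a^2)*(1-c^2)*(1-d^2))/(b*(b^2-a^2)*(b^2-c^2)*(b^2-d^2)) ∧
    Z = -((1-a^2)*(1-b^2)*(1-d^2))/(c*(c^2-a^2)*(c^2-b^2)*(c^2-d^2)) ∧
    T = -((1-a^2)*(1-b^2)*(1-c^2))/(d*(d^2-a^2)*(d^2-b^2)*(d^2-c^2)) := by
  obtain ⟨hab, hac, had, hbc, hbd, hcd⟩ := habs
  have sq_ne : ∀ x y : ℝ, |x| ≠ |y| → x^2 - y^2 ≠ 0 := by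
    intro x y h hxy
    exact h ((sq_eq_sq_iff_abs_eq_abs (a := x) (b := y)).mp (by linarith))
  have hab2 := sq_ne a b hab
  have hac2 := sq_ne a c hac
  have had2 := sq_ne a d had
  have hbc2 := sq_ne b c hbc
  have hbd2 := sq_ne b d hbd
  have hcd2 := sq_ne c d hcd
  have hba2 := sq_ne b a hab.symm
  have hca2 := sq_ne c a hac.symm
  have hda2 := sq_ne d a had.symm
  have hcb2 := sq_ne c b hbc.symm
  have hdb2 := sq_ne d b hbd.symm
  have hdc2 := sq_ne d c hcd.symm
  refine ⟨?_, ?_, ?_, ?_⟩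
  · have hX : a*(a^2-b^2)*(a^2-c^2)*(a^2-d^2)*X = -((1-b^2)*(1-c^2)*(1-d^2)) := by
      linear_combination h7 - (b^2+c^2+d^2)*h5 + (b^2*c^2+b^2*d^2+c^2*d^2)*h3 - b^2*c^2*d^2*h1
    field_simp
    linarith [hX]
  · have hY : b*(b^2-a^2)*(b^2-c^2)*(b^2-d^2)*Y = -((1-a^2)*(1-c^2)*(1-d^2)) := by
      linear_combination h7 - (a^2+c^2+d^2)*h5 + (a^2*c^2+a^2*d^2+c^2*d^2)*h3 - a^2*c^2*d^2*h1
    field_simp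
    linarith [hY]
  · have hZ : c*(c^2-a^2)*(c^2-b^2)*(c^2-d^2)*Z = -((1-a^2)*(1-b^2)*(1-d^2)) := by
      linear_combination h7 - (a^2+b^2+d^2)*h5 + (a^2*b^2+a^2*d^2+b^2*d^2)*h3 - a^2*b^2*d^2*h1
    field_simp
    linarith [hZ]
  · have hT : d*(d^2-a^2)*(d^2-b^2)*(d^2-c^2)*T = -((1-a^2)*(1-b^2)*(1-c^2)) := by
      linear_combination h7 - (a^2+b^2+c^2)*h5 + (a^2*b^2+a^2*c^2+b^2*c^2)*h3 - a^2*b^2*c^2*h1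
    field_simp
    linarith [hT]
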